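/- For positive data a_{tτ} = p^τ·q^t > 0, t,τ = 1,…,T, the system λ_t a_{tt} ≤ λ_τ a_{tτ} (λ_t > 0 for all t) is consistent if and only if for every cyclic sequence t(1),…,t(k) one has a_{t(2)t(1)} a_{t(3)t(2)} ⋯ a_{t(1)t(k)} ≥ a_{t(1)t(1)} ⋯ a_{t(k)t(k)}. -/

import Mathlib

/-!
Dividing the `t`-th inequality by `a t t` turns the system into `λ t ≤ w t τ * λ τ` with
`w t τ = a t τ / a t t`, and the cycle condition into `1 ≤ ∏ w` around every closed walk.
Multiplying the inequalities around a cycle gives necessity. For sufficiency take `λ t` to be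
the infimum of the weights of all walks starting at `t`: prefixing a step `t → τ` to the walks
from `τ` gives `λ t ≤ w t τ * λ τ`, and closing a walk from `t` by an edge `u → t` shows that its
weight is at least `1 / w u t`, so the infimum is positive.
-/

open Finset
open scoped Pointwise

def cyc {k : ℕ} (i : Fin k) : Fin k := ⟨(i.val + 1) % k, Nat.mod_lt _ i.pos⟩

lemma cyc_eq_finRotate {k : ℕ} (i : Fin k) : cyc i = finRotate k i := by
  cases k with
  | zero => exact i.elim0
  | succ k => ext; simp [cyc, Fin.val_add]

lemma cyc_castSucc {m : ℕ} (i : Fin m) : cyc i.castSucc = i.succ := by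
  ext; simp [cyc, Nat.mod_eq_of_lt (Nat.succ_lt_succ i.isLt)]

lemma cyc_last (m : ℕ) : cyc (Fin.last m) = 0 := by
  ext; simp [cyc]

lemma prod_comp_cyc {M : Type*} [CommMonoid M] {k : ℕ} (f : Fin k → M) :
    ∏ i, f (cyc i) = ∏ i, f i := by
  simp only [cyc_eq_finRotate]
  exact Equiv.prod_comp (finRotate k) f

section Walks

variable {ι M : Type*}

def cycleProd [CommMonoid M] (w : ι → ι → M) {k : ℕ} (s : Fin k → ι) : M :=
  ∏ i, w (s (cyc i)) (s i)

/-- The walk `s (Fin.last m) → ⋯ → s 0` runs down the indices, so that closing it up by the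
edge `s 0 → s (Fin.last m)` gives the cycle product along `cyc`. -/
def walkProd [CommMonoid M] (w : ι → ι → M) {m : ℕ} (s : Fin (m + 1) → ι) : M :=
  ∏ i : Fin m, w (s i.succ) (s i.castSucc)

lemma cycleProd_eq_walkProd_mul [CommMonoid M] (w : ι → ι → M) {m : ℕ} (s : Fin (m + 1) → ι) :
    cycleProd w s = walkProd w s * w (s 0) (s (Fin.last m)) := by
  simp [cycleProd, walkProd, Fin.prod_univ_castSucc, cyc_castSucc, cyc_last]

lemma walkProd_snoc [CommMonoid M] (w : ι → ι → M) {m : ℕ} (s : Fin (m + 1) → ι) (t : ι) :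
    walkProd w (Fin.snoc (α := fun _ => ι) s t) = walkProd w s * w t (s (Fin.last m)) := by
  rw [walkProd, Fin.prod_univ_castSucc]
  simp only [walkProd, Fin.succ_castSucc, Fin.snoc_castSucc, Fin.succ_last, Fin.snoc_last]

end Walks

section Potential

variable {ι : Type*}

lemma walkProd_pos {w : ι → ι → ℝ} (hw : ∀ t τ, 0 < w t τ) {m : ℕ} (s : Fin (m + 1) → ι) :
    0 < walkProd w s :=
  prod_pos fun _ _ => hw _ _

lemma one_le_cycleProd_of_le_mul {w : ι → ι → ℝ} {l : ι → ℝ} (hl : ∀ t, 0 < l t)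
    (h : ∀ t τ, l t ≤ w t τ * l τ) {k : ℕ} (s : Fin k → ι) : 1 ≤ cycleProd w s := by
  have hprod : ∏ i, l (s i) ≤ cycleProd w s * ∏ i, l (s i) :=
    calc ∏ i, l (s i) = ∏ i, l (s (cyc i)) := (prod_comp_cyc fun i => l (s i)).symm
      _ ≤ ∏ i, w (s (cyc i)) (s i) * l (s i) :=
        prod_le_prod (fun _ _ => (hl _).le) fun _ _ => h _ _
      _ = cycleProd w s * ∏ i, l (s i) := prod_mul_distrib
  exact le_of_mul_le_mul_right (by simpa using hprod) (prod_pos fun i _ => hl (s i))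

def walkProdsFrom (w : ι → ι → ℝ) (t : ι) : Set ℝ :=
  {x | ∃ (m : ℕ) (s : Fin (m + 1) → ι), s (Fin.last m) = t ∧ walkProd w s = x}

lemma one_mem_walkProdsFrom (w : ι → ι → ℝ) (t : ι) : 1 ∈ walkProdsFrom w t :=
  ⟨0, fun _ => t, rfl, by simp [walkProd]⟩

lemma bddBelow_walkProdsFrom {w : ι → ι → ℝ} (hw : ∀ t τ, 0 < w t τ) (t : ι) :
    BddBelow (walkProdsFrom w t) :=
  ⟨0, by rintro _ ⟨m, s, -, rfl⟩; exact (walkProd_pos hw s).le⟩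

lemma smul_walkProdsFrom_subset (w : ι → ι → ℝ) (t τ : ι) :
    w t τ • walkProdsFrom w τ ⊆ walkProdsFrom w t := by
  rintro _ ⟨_, ⟨m, s, rfl, rfl⟩, rfl⟩
  exact ⟨m + 1, Fin.snoc s t, Fin.snoc_last .., (walkProd_snoc w s t).trans (mul_comm _ _)⟩

lemma sInf_walkProdsFrom_le_mul {w : ι → ι → ℝ} (hw : ∀ t τ, 0 < w t τ) (t τ : ι) :
    sInf (walkProdsFrom w t) ≤ w t τ * sInf (walkProdsFrom w τ) := by
  rw [← smul_eq_mul, ← Real.sInf_smul_of_nonneg (hw t τ).le]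
  exact csInf_le_csInf (bddBelow_walkProdsFrom hw t)
    ⟨_, Set.smul_mem_smul_set (one_mem_walkProdsFrom w τ)⟩ (smul_walkProdsFrom_subset w t τ)

lemma sInf_walkProdsFrom_pos [Finite ι] {w : ι → ι → ℝ} (hw : ∀ t τ, 0 < w t τ)
    (hcyc : ∀ (k : ℕ) (s : Fin k → ι), 1 ≤ cycleProd w s) (t : ι) :
    0 < sInf (walkProdsFrom w t) := by
  obtain ⟨B, hB⟩ := (Set.finite_range fun u => w u t).bddAbove
  have hB_pos : 0 < B := (hw t t).trans_le (hB ⟨t, rfl⟩)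
  refine (one_div_pos.mpr hB_pos).trans_le (le_csInf ⟨1, one_mem_walkProdsFrom w t⟩ ?_)
  rintro _ ⟨m, s, rfl, rfl⟩
  rw [div_le_iff₀ hB_pos]
  calc 1 ≤ cycleProd w s := hcyc _ s
    _ = walkProd w s * w (s 0) (s (Fin.last m)) := cycleProd_eq_walkProd_mul w s
    _ ≤ walkProd w s * B := by gcongr; exacts [(walkProd_pos hw s).le, hB ⟨s 0, rfl⟩]

theorem exists_pos_le_mul_iff_one_le_cycleProd [Finite ι] {w : ι → ι → ℝ}
    (hw : ∀ t τ, 0 < w t τ) :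
    (∃ l : ι → ℝ, (∀ t, 0 < l t) ∧ ∀ t τ, l t ≤ w t τ * l τ) ↔
      ∀ (k : ℕ) (s : Fin k → ι), 1 ≤ cycleProd w s :=
  ⟨fun ⟨_, hl, h⟩ _ => one_le_cycleProd_of_le_mul hl h, fun hcyc =>
    ⟨fun t => sInf (walkProdsFrom w t), sInf_walkProdsFrom_pos hw hcyc,
      sInf_walkProdsFrom_le_mul hw⟩⟩

end Potential

/-- Combinatorial core of the Afriat–Varian theorem: for positive data
`a t τ` (`a t τ = p^τ · q^t`), the system `λ_t a_{tt} ≤ λ_τ a_{tτ}` with all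
`λ_t > 0` is consistent iff every cyclic product
`a_{t(2)t(1)} a_{t(3)t(2)} ⋯ a_{t(1)t(k)}` dominates the corresponding
diagonal product `a_{t(1)t(1)} ⋯ a_{t(k)t(k)}`. -/
theorem afriat_cycle_condition (T : ℕ) (a : Fin T → Fin T → ℝ)
    (ha : ∀ t τ, 0 < a t τ) :
    (∃ l : Fin T → ℝ, (∀ t, 0 < l t) ∧
        ∀ t τ, l t * a t t ≤ l τ * a t τ) ↔
    (∀ (k : ℕ) (t : Fin k → Fin T),
      (∏ i : Fin k, a (t (cyc i)) (t i)) ≥ (∏ i : Fin k, a (t i) (t i))) := by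
  set w : Fin T → Fin T → ℝ := fun t τ => a t τ / a t t
  have hsystem (l : Fin T → ℝ) (t τ : Fin T) : l t * a t t ≤ l τ * a t τ ↔ l t ≤ w t τ * l τ := by
    rw [div_mul_eq_mul_div, le_div_iff₀ (ha t t), mul_comm (a t τ)]
  have hcycle (k : ℕ) (s : Fin k → Fin T) :
      (∏ i, a (s (cyc i)) (s i)) ≥ ∏ i, a (s i) (s i) ↔ 1 ≤ cycleProd w s := by
    rw [cycleProd, prod_div_distrib, prod_comp_cyc fun i => a (s i) (s i),
      one_le_div (prod_pos fun i _ => ha _ _), ge_iff_le]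
  simp_rw [hsystem, hcycle]
  exact exists_pos_le_mul_iff_one_le_cycleProd fun t τ => div_pos (ha t τ) (ha t t)
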